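/- For every integer k ≥ 2, the series Σ_{i=1}^{∞} (1/k^{i+1})·log(1+r_{i−1}^k) converges and the entropy of the golden mean k-tree shift is given by h^{(k)} = ((k−1)/k)·log 2 + (k−1)·Σ_{i=1}^{∞} (1/k^{i+1})·log(1+r_{i−1}^k). -/

import Mathlib

open Filter

/-- `(B_n(0), B_n(1))` for hard-core labelings of the complete rooted `k`-ary tree. -/
noncomputable def Bp (k : ℕ) : ℕ → ℝ × ℝ
  | 0 => (1, 1)
  | n + 1 => (((Bp k n).1 + (Bp k n).2) ^ k, (Bp k n).1 ^ k)

/-- `B_n = B_n(0) + B_n(1)`. -/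
noncomputable def Bt (k n : ℕ) : ℝ := (Bp k n).1 + (Bp k n).2

/-- `r_n = B_n(0) / B_n`. -/
noncomputable def rt (k n : ℕ) : ℝ := (Bp k n).1 / Bt k n

lemma Bp_pos (k n : ℕ) : 0 < (Bp k n).1 ∧ 0 < (Bp k n).2 := by
  induction n with
  | zero => simp [Bp]
  | succ n ih =>
    simp only [Bp]
    exact ⟨pow_pos (by linarith [ih.1, ih.2]) k, pow_pos ih.1 k⟩

lemma Bt_pos (k n : ℕ) : 0 < Bt k n := by
  have := Bp_pos k n; unfold Bt; linarith [this.1, this.2]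

lemma rt_pos (k n : ℕ) : 0 < rt k n := div_pos (Bp_pos k n).1 (Bt_pos k n)

lemma rt_lt_one (k n : ℕ) : rt k n < 1 := by
  have h := Bp_pos k n
  rw [rt, div_lt_one (Bt_pos k n)]
  unfold Bt; linarith [h.2]

lemma log_Bt_succ (k n : ℕ) :
    Real.log (Bt k (n+1)) = k * Real.log (Bt k n) + Real.log (1 + rt k n ^ k) := by
  have hB := Bt_pos k n
  have hr := (rt_pos k n).le
  have hBne : (Bp k n).1 + (Bp k n).2 ≠ 0 := by
    have := Bt_pos k n; unfold Bt at this; linarith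
  have h1 : Bt k (n+1) = (Bt k n)^k * (1 + rt k n ^ k) := by
    simp only [Bt, Bp, rt, div_pow]
    field_simp
  rw [h1, Real.log_mul (by positivity) (by positivity), Real.log_pow]

lemma f_formula (k : ℕ) (hk : 2 ≤ k) (n : ℕ) :
    Real.log (Bt k n) / (k:ℝ)^(n+1) =
      Real.log 2 / k + ∑ i ∈ Finset.range n, 1/(k:ℝ)^(i+2) * Real.log (1 + rt k i ^ k) := by
  have hk0 : (0:ℝ) < k := by positivity
  induction n with
  | zero => simp [Bt, Bp]; norm_num
  | succ n ih =>
    rw [log_Bt_succ, Finset.sum_range_succ, ← add_assoc, ← ih]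
    have hkn : ((k:ℝ))^(n+1) ≠ 0 := by positivity
    have hkn2 : ((k:ℝ))^(n+2) ≠ 0 := by positivity
    field_simp
    ring

/-- For `k ≥ 2`, if `h` is the entropy of the golden mean `k`-tree shift, i.e. the
limit of `(k−1)·log B_n/(k^{n+1}−1)`, then the series
`Σ_{i=1}^{∞} (1/k^{i+1}) log(1+r_{i−1}^k)` converges (below reindexed by `i ↦ i+1`) and
`h = ((k−1)/k) log 2 + (k−1) Σ_{i=1}^{∞} (1/k^{i+1}) log(1+r_{i−1}^k)`. -/
theorem golden_mean_tree_entropy_series (k : ℕ) (hk : 2 ≤ k) (h : ℝ)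
    (hh : Tendsto (fun n : ℕ => ((k : ℝ) - 1) * Real.log (Bt k n) / ((k : ℝ) ^ (n + 1) - 1))
      atTop (nhds h)) :
    Summable (fun i : ℕ => 1 / (k : ℝ) ^ (i + 2) * Real.log (1 + rt k i ^ k)) ∧
    h = ((k : ℝ) - 1) / k * Real.log 2
        + ((k : ℝ) - 1) * ∑' i : ℕ, 1 / (k : ℝ) ^ (i + 2) * Real.log (1 + rt k i ^ k) := by
  have hk0 : (0:ℝ) < k := by positivity
  have hk1 : (1:ℝ) < k := by exact_mod_cast hk
  -- summability
  have hnonneg : ∀ i, 0 ≤ 1 / (k : ℝ) ^ (i + 2) * Real.log (1 + rt k i ^ k) := by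
    intro i
    have : (1:ℝ) ≤ 1 + rt k i ^ k := by nlinarith [pow_nonneg (rt_pos k i).le k]
    have := Real.log_nonneg this
    positivity
  have hle : ∀ i, 1 / (k : ℝ) ^ (i + 2) * Real.log (1 + rt k i ^ k)
      ≤ (Real.log 2 / k^2) * (1/(k:ℝ))^i := by
    intro i
    have hr1 : rt k i ^ k ≤ 1 := pow_le_one₀ (rt_pos k i).le (rt_lt_one k i).le
    have hlog : Real.log (1 + rt k i ^ k) ≤ Real.log 2 :=
      Real.log_le_log (by nlinarith [pow_nonneg (rt_pos k i).le k]) (by linarith)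
    have hlog0 : 0 ≤ Real.log (1 + rt k i ^ k) :=
      Real.log_nonneg (by nlinarith [pow_nonneg (rt_pos k i).le k])
    have hsplit : (1:ℝ)/(k:ℝ)^(i+2) = (1/(k:ℝ))^i * (1/(k:ℝ)^2) := by
      rw [div_pow, one_pow, div_mul_div_comm, one_mul, ← pow_add]
    have h2 : (Real.log 2 / (k:ℝ)^2) * (1/(k:ℝ))^i
        = (1/(k:ℝ))^i * (1/(k:ℝ)^2) * Real.log 2 := by ring
    rw [h2, hsplit]
    exact mul_le_mul_of_nonneg_left hlog (by positivity)
  have hgeom : Summable (fun i : ℕ => (Real.log 2 / k^2) * (1/(k:ℝ))^i) :=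
    (summable_geometric_of_lt_one (by positivity) (by rw [div_lt_one hk0] at *; simpa using hk1)).mul_left _
  have hsum : Summable (fun i : ℕ => 1 / (k : ℝ) ^ (i + 2) * Real.log (1 + rt k i ^ k)) :=
    Summable.of_nonneg_of_le hnonneg hle hgeom
  refine ⟨hsum, ?_⟩
  set T := ∑' i : ℕ, 1 / (k : ℝ) ^ (i + 2) * Real.log (1 + rt k i ^ k) with hT
  have hA : Tendsto (fun n => ∑ i ∈ Finset.range n, 1 / (k : ℝ) ^ (i + 2) * Real.log (1 + rt k i ^ k))
      atTop (nhds T) := hsum.hasSum.tendsto_sum_nat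
  have hf : Tendsto (fun n : ℕ => Real.log (Bt k n) / (k:ℝ)^(n+1)) atTop
      (nhds (Real.log 2 / k + T)) := by
    simp only [f_formula k hk]
    exact tendsto_const_nhds.add hA
  -- denominator factor
  have hpow : Tendsto (fun n : ℕ => (1/(k:ℝ))^(n+1)) atTop (nhds 0) := by
    have := tendsto_pow_atTop_nhds_zero_of_lt_one (by positivity : (0:ℝ) ≤ 1/k)
      (by rw [div_lt_one hk0]; exact hk1)
    exact this.comp (tendsto_add_atTop_nat 1)
  have hden : Tendsto (fun n : ℕ => 1 - (1/(k:ℝ))^(n+1)) atTop (nhds 1) := by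
    have := ((tendsto_const_nhds : Tendsto (fun _ : ℕ => (1:ℝ)) atTop (nhds 1)).sub hpow)
    simpa using this
  have hg : Tendsto (fun n : ℕ => ((k : ℝ) - 1) * Real.log (Bt k n) / ((k : ℝ) ^ (n + 1) - 1))
      atTop (nhds ((((k:ℝ)-1) * (Real.log 2 / k + T)) / 1)) := by
    have heq : ∀ n : ℕ, ((k : ℝ) - 1) * Real.log (Bt k n) / ((k : ℝ) ^ (n + 1) - 1)
        = (((k:ℝ)-1) * (Real.log (Bt k n) / (k:ℝ)^(n+1))) / (1 - (1/(k:ℝ))^(n+1)) := by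
      intro n
      have h1 : ((k:ℝ))^(n+1) ≠ 0 := by positivity
      have h2 : ((k:ℝ))^(n+1) - 1 ≠ 0 := by
        have : (1:ℝ) < (k:ℝ)^(n+1) := one_lt_pow₀ hk1 (by omega)
        linarith
      have h3 : 1 - (1/(k:ℝ))^(n+1) ≠ 0 := by
        have : (1/(k:ℝ))^(n+1) < 1 := pow_lt_one₀ (by positivity) (by rw [div_lt_one hk0]; exact hk1) (by omega)
        linarith
      field_simp
      have h4 : (k:ℝ)^(n+1) * (1 - (1/(k:ℝ))^(n+1)) = (k:ℝ)^(n+1) - 1 := by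
        rw [one_div_pow, mul_sub, mul_one, mul_one_div_cancel h1]
      linear_combination ((k:ℝ)-1) * Real.log (Bt k n) * h4
    simp only [heq]
    exact ((tendsto_const_nhds.mul hf).div hden one_ne_zero)
  have := tendsto_nhds_unique hh hg
  rw [this]
  field_simp
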